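/- arXiv:1112.3941 — 4 statements merged into one kernel-verified Lean document; each statement's English description precedes it below -/
import Mathlib

section
/- Let K(x) = α₀ + α₁x + ⋯ + α_s x^s be a real polynomial with all coefficients α_j ≥ 0 and not all zero, and assume K is strictly increasing on the positive integers. Then for every integer Q ≥ 2, the sum of K(q) over all prime powers q with 2 ≤ q ≤ Q satisfies Σ_{q ≤ Q, q a prime power} K(q) < K(Q) + (1/2)·∫₀^Q K(x) dx + α₀·log₂ Q + Σ_{j=1}^{s} 2^j·α_j·Q^j/(2^j − 1). -/
/-
Split the prime powers in `[2, Q]` by parity. The even ones are exactly `2, 4, …, 2 ^ L` with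
`L = ⌊log₂ Q⌋`, and for a monomial `x ^ j`, `j ≥ 1`, the geometric sum over them is
`< 2 ^ j Q ^ j / (2 ^ j - 1)`, while the constant term contributes `α₀ L ≤ α₀ log₂ Q`; strict
monotonicity of `K` forces some `αⱼ > 0` with `j ≥ 1`, which makes this part strict. The odd
ones are among the odd `n ∈ [3, Q]`: the largest contributes at most `K Q`, and for each other
one, monotonicity gives `2 K n ≤ ∫ₙⁿ⁺² K`, these intervals being disjoint inside `[0, Q]`.
-/

open Finset intervalIntegral

theorem MonotoneOn.mul_sum_le_integral {f : ℝ → ℝ} {x₀ h : ℝ} {n : ℕ} (hh : 0 < h)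
    (hf : MonotoneOn f (Set.Icc x₀ (x₀ + h * n))) :
    h * ∑ i ∈ range n, f (x₀ + h * i) ≤ ∫ x in x₀..x₀ + h * n, f x := by
  have hg : MonotoneOn (fun t => f (x₀ + h * t)) (Set.Icc 0 (0 + n)) := by
    intro a ha b hb hab
    refine hf ⟨?_, ?_⟩ ⟨?_, ?_⟩ (by gcongr) <;> nlinarith [ha.1, ha.2, hb.1, hb.2]
  have := hg.sum_le_integral
  rw [integral_comp_add_mul _ hh.ne', smul_eq_mul, mul_zero, add_zero, zero_add] at this
  simpa only [zero_add] using (le_inv_mul_iff₀ hh).mp this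

theorem filter_isPrimePow_even_Icc_eq (Q : ℕ) :
    (Icc 2 Q).filter (fun q => IsPrimePow q ∧ Even q) = (Icc 1 (Nat.log 2 Q)).image (2 ^ ·) := by
  ext q
  simp only [mem_filter, mem_Icc, mem_image]
  constructor
  · rintro ⟨⟨hq2, hqQ⟩, ⟨p, k, hp, hk, rfl⟩, heven⟩
    have hp2 : p = 2 := ((Nat.prime_dvd_prime_iff_eq Nat.prime_two hp.nat_prime).mp
      (Nat.prime_two.dvd_of_dvd_pow heven.two_dvd)).symm
    subst hp2
    exact ⟨k, ⟨hk, Nat.le_log_of_pow_le one_lt_two hqQ⟩, rfl⟩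
  · rintro ⟨k, ⟨hk, hkL⟩, rfl⟩
    have hQ : Q ≠ 0 := by rintro rfl; simp at hkL; omega
    exact ⟨⟨Nat.le_self_pow (by omega) 2, Nat.pow_le_of_le_log hQ hkL⟩,
      Nat.prime_two.isPrimePow.pow (by omega), (Nat.even_pow' (by omega)).mpr even_two⟩

theorem filter_odd_Icc_two_eq (Q : ℕ) :
    (Icc 2 Q).filter Odd = (range ((Q - 1) / 2)).image (fun i => 2 * i + 3) := by
  ext n
  simp only [mem_filter, mem_Icc, mem_image, mem_range, Nat.odd_iff]
  constructor
  · rintro ⟨⟨h2, hQ⟩, hodd⟩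
    exact ⟨(n - 3) / 2, by omega, by omega⟩
  · rintro ⟨i, hi, rfl⟩
    omega

theorem sum_filter_odd_Icc_two_le {f : ℝ → ℝ} (hf : MonotoneOn f (Set.Ici 0))
    (hf0 : ∀ x, 0 ≤ x → 0 ≤ f x) (Q : ℕ) :
    ∑ n ∈ (Icc 2 Q).filter Odd, f n ≤ f Q + (1 / 2) * ∫ x in (0 : ℝ)..Q, f x := by
  rw [filter_odd_Icc_two_eq, sum_image fun i _ j _ h => by omega]
  rcases hM : (Q - 1) / 2 with _ | M
  · simp only [range_zero, sum_empty]
    have hint : 0 ≤ ∫ x in (0 : ℝ)..Q, f x := integral_nonneg Q.cast_nonneg fun x hx => hf0 x hx.1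
    linarith [hf0 Q Q.cast_nonneg]
  have hMQ : (3 : ℝ) + 2 * M ≤ Q := by exact_mod_cast (by omega : 3 + 2 * M ≤ Q)
  have hlast : f ((2 * M + 3 : ℕ) : ℝ) ≤ f Q :=
    hf (Set.mem_Ici.mpr (by positivity)) (Set.mem_Ici.mpr Q.cast_nonneg) (by push_cast; linarith)
  have hbody : 2 * ∑ i ∈ range M, f ((2 * i + 3 : ℕ) : ℝ) ≤ ∫ x in (0 : ℝ)..Q, f x := by
    calc 2 * ∑ i ∈ range M, f ((2 * i + 3 : ℕ) : ℝ) = 2 * ∑ i ∈ range M, f (3 + 2 * i) := by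
          push_cast; simp only [add_comm]
      _ ≤ ∫ x in (3 : ℝ)..3 + 2 * M, f x :=
          (hf.mono fun x hx => le_trans (by norm_num) hx.1).mul_sum_le_integral two_pos
      _ ≤ ∫ x in (0 : ℝ)..Q, f x := by
          have hsub : Set.uIcc 0 (Q : ℝ) ⊆ Set.Ici 0 :=
            Set.uIcc_of_le (Nat.cast_nonneg (α := ℝ) Q) ▸ Set.Icc_subset_Ici_self
          refine integral_mono_interval (by norm_num) (le_add_of_nonneg_right (by positivity)) hMQ
            ?_ (hf.mono hsub).intervalIntegrable
          filter_upwards [MeasureTheory.ae_restrict_mem measurableSet_Ioc] with x hx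
          exact hf0 x hx.1.le
  rw [sum_range_succ]
  linarith

section NonnegPowerSum

variable {t : Finset ℕ} {α : ℕ → ℝ}

theorem sum_mul_pow_nonneg (hα : ∀ j ∈ t, 0 ≤ α j) {x : ℝ} (hx : 0 ≤ x) :
    0 ≤ ∑ j ∈ t, α j * x ^ j :=
  sum_nonneg fun j hj => mul_nonneg (hα j hj) (pow_nonneg hx j)

theorem monotoneOn_sum_mul_pow (hα : ∀ j ∈ t, 0 ≤ α j) :
    MonotoneOn (fun x : ℝ => ∑ j ∈ t, α j * x ^ j) (Set.Ici 0) := fun _ hx _ _ hxy =>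
  sum_le_sum fun j hj => mul_le_mul_of_nonneg_left (pow_le_pow_left₀ hx hxy j) (hα j hj)

theorem exists_pos_coeff_of_sum_lt_sum_mul_two_pow
    (h : ∑ j ∈ t, α j < ∑ j ∈ t, α j * 2 ^ j) : ∃ j ∈ t, 0 < j ∧ 0 < α j := by
  obtain ⟨j, hj, hlt⟩ := exists_lt_of_sum_lt h
  refine ⟨j, hj, Nat.pos_of_ne_zero fun h0 => by simp [h0] at hlt, ?_⟩
  nlinarith [one_le_pow₀ (M₀ := ℝ) (a := 2) one_le_two (n := j)]

end NonnegPowerSum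

theorem sum_Icc_one_pow_lt {r : ℝ} (hr : 1 < r) (L : ℕ) :
    ∑ k ∈ Icc 1 L, r ^ k < r ^ (L + 1) / (r - 1) := by
  rw [← Ico_add_one_right_eq_Icc, geom_sum_Ico hr.ne' (by omega), pow_one]
  gcongr
  linarith

theorem sum_Icc_one_two_pow_pow_lt {j L : ℕ} (hj : 1 ≤ j) {x : ℝ} (hx : 2 ^ L ≤ x) :
    ∑ k ∈ Icc 1 L, ((2 : ℝ) ^ k) ^ j < 2 ^ j * x ^ j / (2 ^ j - 1) := by
  have hr : (1 : ℝ) < 2 ^ j := one_lt_pow₀ one_lt_two (by omega)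
  calc ∑ k ∈ Icc 1 L, ((2 : ℝ) ^ k) ^ j = ∑ k ∈ Icc 1 L, ((2 : ℝ) ^ j) ^ k := by
        simp only [← pow_mul, mul_comm]
    _ < (2 ^ j) ^ (L + 1) / (2 ^ j - 1) := sum_Icc_one_pow_lt hr L
    _ ≤ 2 ^ j * x ^ j / (2 ^ j - 1) := by
        rw [pow_succ', pow_right_comm]
        gcongr

theorem sum_range_succ_eq_add_sum_Icc_one {M : Type*} [AddCommMonoid M] (f : ℕ → M) (s : ℕ) :
    ∑ j ∈ range (s + 1), f j = f 0 + ∑ j ∈ Icc 1 s, f j := by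
  rw [Nat.range_succ_eq_Icc_zero, Icc_eq_cons_Ioc (Nat.zero_le _), sum_cons,
    ← Icc_add_one_left_eq_Ioc, zero_add]

theorem sum_Icc_one_sum_mul_two_pow_pow_lt {s L : ℕ} {α : ℕ → ℝ} (hα : ∀ j ∈ Icc 1 s, 0 ≤ α j)
    (hpos : ∃ j ∈ Icc 1 s, 0 < α j) {x : ℝ} (hx : 2 ^ L ≤ x) :
    ∑ k ∈ Icc 1 L, ∑ j ∈ range (s + 1), α j * ((2 : ℝ) ^ k) ^ j <
      α 0 * L + ∑ j ∈ Icc 1 s, 2 ^ j * α j * x ^ j / (2 ^ j - 1) := by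
  have hrhs (j) : 2 ^ j * α j * x ^ j / (2 ^ j - 1) = α j * (2 ^ j * x ^ j / (2 ^ j - 1)) := by
    ring
  have hbound (j) (hj : j ∈ Icc 1 s) :
      ∑ k ∈ Icc 1 L, α j * ((2 : ℝ) ^ k) ^ j ≤ 2 ^ j * α j * x ^ j / (2 ^ j - 1) := by
    rw [← mul_sum, hrhs]
    exact mul_le_mul_of_nonneg_left (sum_Icc_one_two_pow_pow_lt (mem_Icc.mp hj).1 hx).le (hα j hj)
  obtain ⟨j, hj, hαj⟩ := hpos
  have hbound_lt :
      ∑ k ∈ Icc 1 L, α j * ((2 : ℝ) ^ k) ^ j < 2 ^ j * α j * x ^ j / (2 ^ j - 1) := by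
    rw [← mul_sum, hrhs]
    exact mul_lt_mul_of_pos_left (sum_Icc_one_two_pow_pow_lt (mem_Icc.mp hj).1 hx) hαj
  have := sum_lt_sum hbound ⟨j, hj, hbound_lt⟩
  rw [sum_comm, sum_range_succ_eq_add_sum_Icc_one]
  simp only [pow_zero, mul_one, sum_const, Nat.card_Icc, add_tsub_cancel_right, nsmul_eq_mul]
  linarith

theorem primePow_sum_lt_of_polynomial_general (s : ℕ) (α : ℕ → ℝ)
    (hα : ∀ j, j ≤ s → 0 ≤ α j)
    (K : ℝ → ℝ) (hKdef : K = fun x => ∑ j ∈ Finset.range (s + 1), α j * x ^ j)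
    (hmono : ∀ a b : ℕ, 0 < a → a < b → K a < K b)
    (Q : ℕ) (hQ : 2 ≤ Q) :
    ∑ q ∈ (Finset.Icc 2 Q).filter IsPrimePow, K q <
      K Q + (1 / 2) * (∫ x in (0 : ℝ)..(Q : ℝ), K x) + α 0 * Real.logb 2 Q +
        ∑ j ∈ Finset.Icc 1 s, 2 ^ j * α j * (Q : ℝ) ^ j / (2 ^ j - 1) := by
  have hα' (j) (hj : j ∈ range (s + 1)) : 0 ≤ α j := hα j (Nat.lt_succ_iff.mp (mem_range.mp hj))
  have hK0 (x : ℝ) (hx : 0 ≤ x) : 0 ≤ K x := hKdef ▸ sum_mul_pow_nonneg hα' hx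
  have hKmono : MonotoneOn K (Set.Ici 0) := hKdef ▸ monotoneOn_sum_mul_pow hα'
  obtain ⟨j, hj, hj0, hαj⟩ : ∃ j ∈ range (s + 1), 0 < j ∧ 0 < α j :=
    exists_pos_coeff_of_sum_lt_sum_mul_two_pow <| by
      simpa [hKdef] using hmono 1 2 one_pos one_lt_two
  have hEven : ∑ k ∈ Icc 1 (Nat.log 2 Q), K ((2 ^ k : ℕ) : ℝ) <
      α 0 * Nat.log 2 Q + ∑ j ∈ Icc 1 s, 2 ^ j * α j * (Q : ℝ) ^ j / (2 ^ j - 1) := by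
    subst hKdef
    push_cast
    refine sum_Icc_one_sum_mul_two_pow_pow_lt (fun j hj => hα j (mem_Icc.mp hj).2)
      ⟨j, mem_Icc.mpr ⟨hj0, Nat.lt_succ_iff.mp (mem_range.mp hj)⟩, hαj⟩ ?_
    exact_mod_cast Nat.pow_log_le_self 2 (by omega : Q ≠ 0)
  have hOdd : ∑ q ∈ (Icc 2 Q).filter (fun q => IsPrimePow q ∧ ¬Even q), K q ≤
      K Q + (1 / 2) * ∫ x in (0 : ℝ)..Q, K x := by
    refine (sum_le_sum_of_subset_of_nonneg ?_ fun q _ _ => hK0 _ (Nat.cast_nonneg q)).trans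
      (sum_filter_odd_Icc_two_le hKmono hK0 Q)
    intro q
    simp only [mem_filter, Nat.not_even_iff_odd]
    tauto
  have hlog : α 0 * Nat.log 2 Q ≤ α 0 * Real.logb 2 Q := by
    simpa using mul_le_mul_of_nonneg_left (Real.natLog_le_logb Q 2) (hα 0 s.zero_le)
  rw [← sum_filter_add_sum_filter_not _ Even, filter_filter, filter_filter,
    filter_isPrimePow_even_Icc_eq, sum_image fun _ _ _ _ h => Nat.pow_right_injective le_rfl h]
  linarith

theorem primePow_sum_lt_of_polynomial (s : ℕ) (α : ℕ → ℝ)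
    (hα : ∀ j, j ≤ s → 0 ≤ α j) (hne : ∃ j, j ≤ s ∧ α j ≠ 0)
    (K : ℝ → ℝ) (hKdef : K = fun x => ∑ j ∈ Finset.range (s + 1), α j * x ^ j)
    (hmono : ∀ a b : ℕ, 0 < a → a < b → K a < K b)
    (Q : ℕ) (hQ : 2 ≤ Q) :
    ∑ q ∈ (Finset.Icc 2 Q).filter IsPrimePow, K q <
      K Q + (1 / 2) * (∫ x in (0 : ℝ)..(Q : ℝ), K x) + α 0 * Real.logb 2 Q +
        ∑ j ∈ Finset.Icc 1 s, 2 ^ j * α j * (Q : ℝ) ^ j / (2 ^ j - 1) :=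
  primePow_sum_lt_of_polynomial_general s α hα K hKdef hmono Q hQ
end

section
/- Fix an integer r ≥ 2 and consider the three functions on integers q ≥ 2: g₀(q) = (q^{r+1} − q)/(q − 1), g₁(q) = (q^{r+1} − q)/(q − 1) − 1, and h(q) = (q^{r+1} − 1)/(q − 1). If q₁ and q₂ are prime powers and f₁, f₂ ∈ {g₀, g₁, h} satisfy f₁(q₁) = f₂(q₂), then q₁ = q₂ and f₁ = f₂. -/
/-!
Writing `S(q) = 1 + q + ⋯ + q^r`, the three degrees are `g₀ = S - 1`, `g₁ = S - 2` and `h = S`,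
so every value `f(q)` lies in `[S(q) - 2, S(q)]`. For `r ≥ 2` and integers `0 < q < q'`,
already the `q²` terms give `S(q') ≥ S(q) + 3`, so these windows are disjoint: the value
determines `q`, and then the offset `0`, `1` or `2` determines `f`.
-/

open Finset

lemma geom_sum_sub_one_eq {K : Type*} [Field K] {x : K} (hx : x ≠ 1) (n : ℕ) :
    ∑ i ∈ range (n + 1), x ^ i - 1 = (x ^ (n + 1) - x) / (x - 1) := by
  have hx' : x - 1 ≠ 0 := sub_ne_zero.mpr hx
  rw [geom_sum_eq hx]
  field_simp
  ring

lemma geom_sum_add_three_le {n x y : ℕ} (hn : 3 ≤ n) (hx : 0 < x) (hxy : x < y) :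
    ∑ i ∈ range n, x ^ i + 3 ≤ ∑ i ∈ range n, y ^ i := by
  have h2 : 2 ∈ range n := mem_range.mpr (by omega)
  rw [← add_sum_erase _ _ h2, ← add_sum_erase _ _ h2]
  have hsquare : x ^ 2 + 3 ≤ y ^ 2 := by nlinarith
  have htail : ∑ i ∈ (range n).erase 2, x ^ i ≤ ∑ i ∈ (range n).erase 2, y ^ i :=
    sum_le_sum fun i _ => Nat.pow_le_pow_left hxy.le i
  omega

lemma cast_geom_sum_add_three_le {n x y : ℕ} (hn : 3 ≤ n) (hx : 0 < x) (hxy : x < y) :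
    ∑ i ∈ range n, (x : ℚ) ^ i + 3 ≤ ∑ i ∈ range n, (y : ℚ) ^ i := by
  exact_mod_cast geom_sum_add_three_le hn hx hxy

lemma eq_of_geom_sum_sub_eq {n x y : ℕ} (hn : 3 ≤ n) (hx : 0 < x) (hy : 0 < y) {a b : ℚ}
    (ha : a ∈ Set.Icc 0 2) (hb : b ∈ Set.Icc 0 2)
    (h : ∑ i ∈ range n, (x : ℚ) ^ i - a = ∑ i ∈ range n, (y : ℚ) ^ i - b) : x = y := by
  obtain ⟨ha₀, ha₂⟩ := ha
  obtain ⟨hb₀, hb₂⟩ := hb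
  rcases lt_trichotomy x y with hxy | rfl | hyx
  · linarith [cast_geom_sum_add_three_le hn hx hxy]
  · rfl
  · linarith [cast_geom_sum_add_three_le hn hy hyx]

theorem linear_small_degrees_determine (r : ℕ) (hr : 2 ≤ r)
    (g₀ g₁ h : ℕ → ℚ)
    (hg₀ : g₀ = fun (q : ℕ) => ((q : ℚ) ^ (r + 1) - q) / (q - 1))
    (hg₁ : g₁ = fun (q : ℕ) => ((q : ℚ) ^ (r + 1) - q) / (q - 1) - 1)
    (hh : h = fun (q : ℕ) => ((q : ℚ) ^ (r + 1) - 1) / (q - 1))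
    (q₁ q₂ : ℕ) (hq₁ : IsPrimePow q₁) (hq₂ : IsPrimePow q₂)
    (f₁ f₂ : ℕ → ℚ)
    (hf₁ : f₁ ∈ ({g₀, g₁, h} : Set (ℕ → ℚ)))
    (hf₂ : f₂ ∈ ({g₀, g₁, h} : Set (ℕ → ℚ)))
    (heq : f₁ q₁ = f₂ q₂) :
    q₁ = q₂ ∧ f₁ = f₂ := by
  set S : ℕ → ℚ := fun q => ∑ i ∈ range (r + 1), (q : ℚ) ^ i
  have hvalues : ∀ q, IsPrimePow q → g₀ q = S q - 1 ∧ g₁ q = S q - 2 ∧ h q = S q - 0 := by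
    intro q hq
    have hq1 : (q : ℚ) ≠ 1 := by exact_mod_cast hq.one_lt.ne'
    subst hg₀ hg₁ hh
    refine ⟨(geom_sum_sub_one_eq hq1 r).symm, ?_, ?_⟩
    · simp only [← geom_sum_sub_one_eq hq1 r, S]; ring
    · simp only [← geom_sum_eq hq1, S, sub_zero]
  have hoffset : ∀ f ∈ ({g₀, g₁, h} : Set (ℕ → ℚ)), ∀ q, IsPrimePow q →
      ∃ d ∈ Set.Icc (0 : ℚ) 2, f q = S q - d := by
    rintro f hf q hq
    obtain ⟨e₀, e₁, e₂⟩ := hvalues q hq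
    rcases hf with rfl | rfl | rfl
    exacts [⟨1, by norm_num, e₀⟩, ⟨2, by norm_num, e₁⟩, ⟨0, by norm_num, e₂⟩]
  obtain ⟨d₁, hd₁, e₁⟩ := hoffset f₁ hf₁ q₁ hq₁
  obtain ⟨d₂, hd₂, e₂⟩ := hoffset f₂ hf₂ q₂ hq₂
  obtain rfl : q₁ = q₂ :=
    eq_of_geom_sum_sub_eq (by omega) hq₁.pos hq₂.pos hd₁ hd₂ (e₁ ▸ e₂ ▸ heq)
  refine ⟨rfl, ?_⟩
  obtain ⟨e₀, e₁, e₂⟩ := hvalues q₁ hq₁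
  rcases hf₁ with rfl | rfl | rfl <;> rcases hf₂ with rfl | rfl | rfl <;>
    first | rfl | (exfalso; linarith)
end

section
/- Fix an integer r ≥ 2 and consider the two functions on integers q ≥ 2: u(q) = (q^{r+1} − q·(−1)^r)/(q + 1) and v(q) = (q^{r+1} + (−1)^r)/(q + 1). If q₁ and q₂ are prime powers and f₁, f₂ ∈ {u, v} satisfy f₁(q₁) = f₂(q₂), then q₁ = q₂ and f₁ = f₂. -/
/-!
Both `u q` and `v q` have the form `(q ^ (r + 1) + e) / (q + 1)` with `|e| ≤ q`, so they lie in the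
interval `[q ^ r - q ^ (r - 1) - 1, q ^ r]`. For `r ≥ 2` these intervals are strictly increasing in
`q ≥ 2`, so equal values force equal `q`; and `u q - v q = ±1` separates `u` from `v`.
-/

section NearPowDiv

variable {K : Type*} [Field K] [LinearOrder K] [IsStrictOrderedRing K] {x e : K}

lemma div_le_pow_of_abs_le (n : ℕ) (hx : 1 ≤ x) (he : |e| ≤ x) :
    (x ^ (n + 2) + e) / (x + 1) ≤ x ^ (n + 1) := by
  have hxn : x ≤ x ^ (n + 1) := le_self_pow₀ hx (by omega)
  rw [div_le_iff₀ (by linarith), pow_succ x (n + 1)]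
  linarith [(abs_le.1 he).2]

lemma pow_sub_pow_sub_one_le_div_of_abs_le (n : ℕ) (hx : 1 ≤ x) (he : |e| ≤ x) :
    x ^ (n + 1) - x ^ n - 1 ≤ (x ^ (n + 2) + e) / (x + 1) := by
  have hxn : 0 ≤ x ^ n := pow_nonneg (by linarith) n
  rw [le_div_iff₀ (by linarith), pow_succ x (n + 1), pow_succ x n]
  nlinarith [(abs_le.1 he).1]

lemma pow_lt_pow_sub_pow_sub_one {a b : K} {n : ℕ} (hn : n ≠ 0) (ha : 2 ≤ a) (hab : a + 1 ≤ b) :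
    a ^ (n + 1) < b ^ (n + 1) - b ^ n - 1 :=
  have hb : 0 ≤ b := by linarith
  calc a ^ (n + 1) < (a ^ n + 1) * a - 1 := by rw [add_mul, one_mul, ← pow_succ]; linarith
    _ ≤ (a + 1) ^ n * a - 1 := by
      gcongr
      simpa using pow_add_pow_le (x := a) (y := 1) (by linarith) zero_le_one hn
    _ ≤ b ^ n * (b - 1) - 1 := by gcongr; linarith
    _ = b ^ (n + 1) - b ^ n - 1 := by ring

lemma div_lt_div_of_abs_le {a b e₁ e₂ : K} {r : ℕ} (hr : 2 ≤ r) (ha : 2 ≤ a) (hab : a + 1 ≤ b)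
    (he₁ : |e₁| ≤ a) (he₂ : |e₂| ≤ b) :
    (a ^ (r + 1) + e₁) / (a + 1) < (b ^ (r + 1) + e₂) / (b + 1) := by
  obtain ⟨n, rfl⟩ : ∃ n, r = n + 1 := ⟨r - 1, by omega⟩
  calc (a ^ (n + 2) + e₁) / (a + 1) ≤ a ^ (n + 1) := div_le_pow_of_abs_le n (by linarith) he₁
    _ < b ^ (n + 1) - b ^ n - 1 := pow_lt_pow_sub_pow_sub_one (by omega) ha hab
    _ ≤ (b ^ (n + 2) + e₂) / (b + 1) :=
      pow_sub_pow_sub_one_le_div_of_abs_le n (by linarith) he₂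

end NearPowDiv

theorem unitary_small_degrees_determine (r : ℕ) (hr : 2 ≤ r)
    (u v : ℕ → ℚ)
    (hu : u = fun (q : ℕ) => ((q : ℚ) ^ (r + 1) - q * (-1 : ℚ) ^ r) / (q + 1))
    (hv : v = fun (q : ℕ) => ((q : ℚ) ^ (r + 1) + (-1 : ℚ) ^ r) / (q + 1))
    (q₁ q₂ : ℕ) (hq₁ : IsPrimePow q₁) (hq₂ : IsPrimePow q₂)
    (f₁ f₂ : ℕ → ℚ)
    (hf₁ : f₁ ∈ ({u, v} : Set (ℕ → ℚ)))
    (hf₂ : f₂ ∈ ({u, v} : Set (ℕ → ℚ)))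
    (heq : f₁ q₁ = f₂ q₂) :
    q₁ = q₂ ∧ f₁ = f₂ := by
  have hform : ∀ f ∈ ({u, v} : Set (ℕ → ℚ)), ∀ q : ℕ, 1 ≤ q →
      ∃ e : ℚ, |e| ≤ q ∧ f q = ((q : ℚ) ^ (r + 1) + e) / (q + 1) := by
    rintro f (rfl | rfl) q hq
    · exact ⟨-(q * (-1) ^ r), by simp [abs_mul], by simp [hu, sub_eq_add_neg]⟩
    · exact ⟨(-1) ^ r, by simpa using hq, by simp [hv]⟩
  have hlt : ∀ f ∈ ({u, v} : Set (ℕ → ℚ)), ∀ g ∈ ({u, v} : Set (ℕ → ℚ)),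
      ∀ a b : ℕ, 2 ≤ a → a < b → f a < g b := by
    intro f hf g hg a b ha hab
    obtain ⟨e, he, hfa⟩ := hform f hf a (by omega)
    obtain ⟨e', he', hgb⟩ := hform g hg b (by omega)
    rw [hfa, hgb]
    exact div_lt_div_of_abs_le hr (by exact_mod_cast ha) (by exact_mod_cast hab) he he'
  have hq : q₁ = q₂ := le_antisymm
    (not_lt.1 fun h => (hlt f₂ hf₂ f₁ hf₁ _ _ hq₂.two_le h).ne' heq)
    (not_lt.1 fun h => (hlt f₁ hf₁ f₂ hf₂ _ _ hq₁.two_le h).ne heq)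
  subst hq
  have huv : u q₁ - v q₁ = -(-1) ^ r := by
    rw [hu, hv]
    field_simp
    ring
  have hne : u q₁ ≠ v q₁ := fun h => by simp [h] at huv
  refine ⟨rfl, ?_⟩
  rcases hf₁ with rfl | rfl <;> rcases hf₂ with rfl | rfl
  · rfl
  · exact absurd heq hne
  · exact absurd heq.symm hne
  · rfl
end

section
/- For an integer q of the form q = 2^{2k+1} with k ≥ 2, write √(2q) = 2^{k+1} and consider the five functions b₁(q) = (q − √(2q) + 1)(q − 1), b₂(q) = q² − 1, b₃(q) = q², b₄(q) = q² + 1, b₅(q) = (q + √(2q) + 1)(q − 1). Then: (i) (3/4)·q² < b_i(q) < 2q² for each i; and (ii) if q₁ = 2^{2k₁+1}, q₂ = 2^{2k₂+1} with k₁, k₂ ≥ 2 and b_i(q₁) = b_j(q₂) for some i, j, then q₁ = q₂ and i = j. -/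
/-! With `q = 2^(2K+1)` and `s = 2^(K+1) = √(2q)` the five degrees are
`q² - sq + s - 1 < q² - 1 < q² < q² + 1 < q² + sq - s - 1`. For `K ≥ 2` we have `4s ≤ q`, so the
`±sq` terms stay within `q²/4` and every degree lies in `(3q²/4, 2q²)`. Consecutive admissible
values of `q` differ by a factor of `4`, and `2q² < 3(4q)²/4`, so these intervals are disjoint:
a degree determines `q`, and then the strict ordering determines the index. -/

/-- The degrees of the irreducible characters of the Suzuki group `²B₂(q)`, `q = 2^(2k+1)`,
other than the two of degree `(q - 1)√(q/2)`; here `√(2q) = 2^(k+1)`. -/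
def suzukiDeg : Fin 5 → ℕ → ℚ
  | 0, K => ((2 : ℚ) ^ (2 * K + 1) - 2 ^ (K + 1) + 1) * ((2 : ℚ) ^ (2 * K + 1) - 1)
  | 1, K => ((2 : ℚ) ^ (2 * K + 1)) ^ 2 - 1
  | 2, K => ((2 : ℚ) ^ (2 * K + 1)) ^ 2
  | 3, K => ((2 : ℚ) ^ (2 * K + 1)) ^ 2 + 1
  | 4, K => ((2 : ℚ) ^ (2 * K + 1) + 2 ^ (K + 1) + 1) * ((2 : ℚ) ^ (2 * K + 1) - 1)

lemma four_mul_two_pow_le (K : ℕ) (hK : 2 ≤ K) : 4 * (2 : ℚ) ^ (K + 1) ≤ 2 ^ (2 * K + 1) :=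
  calc 4 * (2 : ℚ) ^ (K + 1) = 2 ^ (K + 3) := by ring
    _ ≤ 2 ^ (2 * K + 1) := pow_le_pow_right₀ one_le_two (by omega)

lemma suzukiDeg_strictMono (K : ℕ) (hK : 1 ≤ K) : StrictMono (suzukiDeg · K) := by
  have hs : (4 : ℚ) ≤ 2 ^ (K + 1) :=
    calc (4 : ℚ) = 2 ^ 2 := by norm_num
      _ ≤ 2 ^ (K + 1) := pow_le_pow_right₀ one_le_two (by omega)
  have hq : (2 : ℚ) ^ (K + 1) ≤ 2 ^ (2 * K + 1) := pow_le_pow_right₀ one_le_two (by omega)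
  rw [Fin.strictMono_iff_lt_succ]
  intro i
  fin_cases i <;>
    simp only [suzukiDeg, Fin.zero_eta, Fin.mk_one, Fin.reduceFinMk, Fin.reduceCastSucc,
      Fin.reduceSucc] <;>
    nlinarith

lemma suzukiDeg_bounds (K : ℕ) (hK : 2 ≤ K) (i : Fin 5) :
    (3 / 4 : ℚ) * ((2 : ℚ) ^ (2 * K + 1)) ^ 2 < suzukiDeg i K ∧
      suzukiDeg i K < 2 * ((2 : ℚ) ^ (2 * K + 1)) ^ 2 := by
  have hmono := (suzukiDeg_strictMono K (by omega)).monotone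
  have h4s := four_mul_two_pow_le K hK
  have hs : (1 : ℚ) < 2 ^ (K + 1) := one_lt_pow₀ one_lt_two (by omega)
  refine ⟨lt_of_lt_of_le ?_ (hmono (Fin.zero_le i)), lt_of_le_of_lt (hmono (Fin.le_last i)) ?_⟩
  · simp only [suzukiDeg]
    nlinarith
  · simp only [suzukiDeg, Fin.last]
    nlinarith

lemma suzukiDeg_lt_of_lt {K₁ K₂ : ℕ} (hK₁ : 2 ≤ K₁) (hK : K₁ < K₂) (i j : Fin 5) :
    suzukiDeg i K₁ < suzukiDeg j K₂ := by
  have hq : 4 * (2 : ℚ) ^ (2 * K₁ + 1) ≤ 2 ^ (2 * K₂ + 1) :=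
    calc 4 * (2 : ℚ) ^ (2 * K₁ + 1) = 2 ^ (2 * K₁ + 3) := by ring
      _ ≤ 2 ^ (2 * K₂ + 1) := pow_le_pow_right₀ one_le_two (by omega)
  have hq₁ : (0 : ℚ) < 2 ^ (2 * K₁ + 1) := by positivity
  have h₁ := (suzukiDeg_bounds K₁ hK₁ i).2
  have h₂ := (suzukiDeg_bounds K₂ (by omega) j).1
  nlinarith

theorem suzuki_degrees_determine :
    (∀ K : ℕ, 2 ≤ K → ∀ i : Fin 5,
      (3 / 4 : ℚ) * ((2 : ℚ) ^ (2 * K + 1)) ^ 2 < suzukiDeg i K ∧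
        suzukiDeg i K < 2 * ((2 : ℚ) ^ (2 * K + 1)) ^ 2) ∧
    (∀ K₁ K₂ : ℕ, 2 ≤ K₁ → 2 ≤ K₂ → ∀ i j : Fin 5,
      suzukiDeg i K₁ = suzukiDeg j K₂ →
        (2 : ℕ) ^ (2 * K₁ + 1) = 2 ^ (2 * K₂ + 1) ∧ i = j) := by
  refine ⟨suzukiDeg_bounds, fun K₁ K₂ h₁ h₂ i j h => ?_⟩
  obtain rfl : K₁ = K₂ := by
    rcases lt_trichotomy K₁ K₂ with hlt | heq | hgt
    · exact absurd h (suzukiDeg_lt_of_lt h₁ hlt i j).ne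
    · exact heq
    · exact absurd h (suzukiDeg_lt_of_lt h₂ hgt j i).ne'
  exact ⟨rfl, (suzukiDeg_strictMono K₁ (by omega)).injective h⟩
end
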